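/- Let A : P → ℝ^{d×d} with A(ρ) Metzler for each ρ, and suppose A is monotone in the sense that A(ρ_dg, ρ_ct, ρ_cv) ≤ A(ρ_dg⁻, ρ_ct⁺, ρ_cv) =: A⁺(ρ_cv) entrywise for all (ρ_dg, ρ_ct, ρ_cv) in the box P = [ρ_dg⁻, ρ_dg⁺] × [ρ_ct⁻, ρ_ct⁺] × P_cv. Then A(ρ) is Hurwitz stable for all ρ ∈ P if and only if A⁺(ρ_cv) is Hurwitz stable for all ρ_cv ∈ P_cv. -/

import Mathlib

/-!
If `M ≤ N` entrywise with `M` Metzler and `N` Hurwitz stable, shift both by a large multiple `s`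
of the identity: `P = s + M` and `Q = s + N` are nonnegative with `P ≤ Q`, and the spectrum
`s + σ(N)` of `Q` lies in the open disc of radius `s`. For nonnegative matrices the spectral
radius is monotone: an eigenpair `(λ, v)` of `P` gives `|λ| |v| ≤ P |v| ≤ Q |v|`, hence
`|λ|ⁿ ≤ ‖Qⁿ‖`, and Gelfand's formula bounds `|λ|` by the spectral radius of `Q`. So every
eigenvalue `μ` of `M` satisfies `|μ + s| < s`, which forces `Re μ < 0`. The converse is the
specialisation to the corner `(ρ_dg⁻, ρ_ct⁺)` of the box.
-/

open Matrix

def Metzler {d : ℕ} (M : Matrix (Fin d) (Fin d) ℝ) : Prop :=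
  ∀ i j, i ≠ j → 0 ≤ M i j

def HurwitzStable {d : ℕ} (M : Matrix (Fin d) (Fin d) ℝ) : Prop :=
  ∀ μ ∈ spectrum ℂ (M.map Complex.ofReal), μ.re < 0

open Filter
open scoped NNReal ENNReal

attribute [local instance] Matrix.linftyOpNormedAddCommGroup Matrix.linftyOpNormedRing
  Matrix.linftyOpNormedAlgebra

theorem le_spectralRadius_of_pow_le_nnnorm_pow {A : Type*} [NormedRing A] [NormedAlgebra ℂ A]
    [CompleteSpace A] {a : A} {r : ℝ≥0} (h : ∀ n : ℕ, r ^ n ≤ ‖a ^ n‖₊) :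
    (r : ℝ≥0∞) ≤ spectralRadius ℂ a := by
  refine ge_of_tendsto (spectrum.pow_nnnorm_pow_one_div_tendsto_nhds_spectralRadius a) ?_
  filter_upwards [eventually_ne_atTop 0] with n hn
  calc (r : ℝ≥0∞) = ((r : ℝ≥0∞) ^ n) ^ (1 / n : ℝ) := by
        rw [← ENNReal.rpow_natCast, ← ENNReal.rpow_mul, mul_one_div_cancel (by positivity),
          ENNReal.rpow_one]
    _ ≤ (‖a ^ n‖₊ : ℝ≥0∞) ^ (1 / n : ℝ) := by gcongr; exact_mod_cast h n

namespace Matrix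

variable {ι : Type*} [Fintype ι]

section OrderedSemiring

variable {α : Type*} [CommSemiring α] [PartialOrder α] [IsOrderedRing α] {P Q : Matrix ι ι α}

theorem mulVec_mono_of_nonneg (hP : ∀ i j, 0 ≤ P i j) {x y : ι → α} (hxy : x ≤ y) :
    P *ᵥ x ≤ P *ᵥ y := fun i =>
  Finset.sum_le_sum fun j _ => mul_le_mul_of_nonneg_left (hxy j) (hP i j)

theorem mulVec_le_mulVec_of_le (hPQ : ∀ i j, P i j ≤ Q i j) {x : ι → α} (hx : 0 ≤ x) :
    P *ᵥ x ≤ Q *ᵥ x := fun i =>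
  Finset.sum_le_sum fun j _ => mul_le_mul_of_nonneg_right (hPQ i j) (hx j)

theorem pow_smul_le_pow_mulVec [DecidableEq ι] (hP : ∀ i j, 0 ≤ P i j) {t : α} (ht : 0 ≤ t)
    {w : ι → α} (h : t • w ≤ P *ᵥ w) (n : ℕ) : t ^ n • w ≤ (P ^ n) *ᵥ w := by
  induction n with
  | zero => simp
  | succ n ih =>
    calc t ^ (n + 1) • w = t ^ n • (t • w) := by rw [pow_succ, mul_smul]
      _ ≤ t ^ n • (P *ᵥ w) := smul_le_smul_of_nonneg_left h (pow_nonneg ht n)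
      _ = P *ᵥ (t ^ n • w) := (mulVec_smul P (t ^ n) w).symm
      _ ≤ P *ᵥ ((P ^ n) *ᵥ w) := mulVec_mono_of_nonneg hP ih
      _ = (P ^ (n + 1)) *ᵥ w := by rw [mulVec_mulVec, pow_succ']

end OrderedSemiring

theorem exists_mulVec_eq_smul_of_mem_spectrum [DecidableEq ι] {K : Type*} [Field K]
    {A : Matrix ι ι K} {μ : K} (hμ : μ ∈ spectrum K A) : ∃ v ≠ 0, A *ᵥ v = μ • v := by
  rw [← spectrum_toLin', ← Module.End.hasEigenvalue_iff_mem_spectrum] at hμ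
  obtain ⟨v, hv⟩ := hμ.exists_hasEigenvector
  exact ⟨v, hv.2, by simpa using hv.apply_eq_smul⟩

theorem norm_smul_le_mulVec_norm {P : Matrix ι ι ℝ} (hP : ∀ i j, 0 ≤ P i j) {v : ι → ℂ} {μ : ℂ}
    (hv : P.map Complex.ofReal *ᵥ v = μ • v) : ‖μ‖ • (fun i => ‖v i‖) ≤ P *ᵥ fun i => ‖v i‖ := by
  intro i
  calc ‖μ‖ * ‖v i‖ = ‖∑ j, (P i j : ℂ) * v j‖ := by
        rw [← norm_mul, ← smul_eq_mul, ← Pi.smul_apply, ← hv]; rfl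
    _ ≤ ∑ j, ‖(P i j : ℂ) * v j‖ := norm_sum_le _ _
    _ = (P *ᵥ fun i => ‖v i‖) i := by
        simp [mulVec, dotProduct, Complex.norm_real, abs_of_nonneg (hP i _)]

theorem linfty_opNNNorm_map_ofReal {m n : Type*} [Fintype m] [Fintype n] (P : Matrix m n ℝ) :
    ‖P.map Complex.ofReal‖₊ = ‖P‖₊ := by
  simp [linfty_opNNNorm_def]

theorem le_spectralRadius_of_smul_le_mulVec [DecidableEq ι] {P : Matrix ι ι ℝ}
    (hP : ∀ i j, 0 ≤ P i j) {w : ι → ℝ} (hw₀ : 0 ≤ w) (hw : w ≠ 0) {t : ℝ≥0}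
    (h : (t : ℝ) • w ≤ P *ᵥ w) : (t : ℝ≥0∞) ≤ spectralRadius ℂ (P.map Complex.ofReal) := by
  refine le_spectralRadius_of_pow_le_nnnorm_pow fun n => ?_
  have hpow : P.map Complex.ofReal ^ n = (P ^ n).map Complex.ofReal :=
    (Matrix.map_pow P Complex.ofRealHom n).symm
  rw [hpow, linfty_opNNNorm_map_ofReal, ← NNReal.coe_le_coe, NNReal.coe_pow, coe_nnnorm]
  have htw : 0 ≤ (t : ℝ) ^ n • w := smul_nonneg (by positivity) hw₀
  refine le_of_mul_le_mul_right ?_ (norm_pos_iff.mpr hw)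
  calc (t : ℝ) ^ n * ‖w‖ = ‖(t : ℝ) ^ n • w‖ := by
        rw [norm_smul, Real.norm_of_nonneg (by positivity)]
    _ ≤ ‖(P ^ n) *ᵥ w‖ := by
        refine (pi_norm_le_iff_of_nonneg (norm_nonneg _)).2 fun i => ?_
        rw [Real.norm_of_nonneg (htw i)]
        exact (pow_smul_le_pow_mulVec hP t.coe_nonneg h n i).trans
          ((le_abs_self _).trans (norm_le_pi_norm ((P ^ n) *ᵥ w) i))
    _ ≤ ‖P ^ n‖ * ‖w‖ := linfty_opNorm_mulVec _ _

theorem map_ofReal_algebraMap_add [DecidableEq ι] (M : Matrix ι ι ℝ) (s : ℝ) :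
    (algebraMap ℝ _ s + M).map Complex.ofReal =
      algebraMap ℂ _ (s : ℂ) + M.map Complex.ofReal := by
  ext i j
  simp [algebraMap_eq_diagonal, diagonal_apply, apply_ite Complex.ofReal]

theorem spectralRadius_map_ofReal_mono [DecidableEq ι] {P Q : Matrix ι ι ℝ}
    (hP : ∀ i j, 0 ≤ P i j) (hPQ : ∀ i j, P i j ≤ Q i j) :
    spectralRadius ℂ (P.map Complex.ofReal) ≤ spectralRadius ℂ (Q.map Complex.ofReal) := by
  refine iSup₂_le fun μ hμ => ?_
  obtain ⟨v, hv, hμv⟩ := exists_mulVec_eq_smul_of_mem_spectrum hμ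
  have hw₀ : 0 ≤ fun i => ‖v i‖ := fun i => norm_nonneg (v i)
  have hw : (fun i => ‖v i‖) ≠ 0 := by simpa [funext_iff, Function.ne_iff] using hv
  exact le_spectralRadius_of_smul_le_mulVec (fun i j => (hP i j).trans (hPQ i j)) hw₀ hw
    ((norm_smul_le_mulVec_norm hP hμv).trans (mulVec_le_mulVec_of_le hPQ hw₀))

end Matrix

theorem Complex.eventually_norm_add_ofReal_lt {z : ℂ} (hz : z.re < 0) :
    ∀ᶠ s : ℝ in atTop, ‖z + s‖ < s := by
  filter_upwards [eventually_gt_atTop 0, eventually_gt_atTop (‖z‖ ^ 2 / (2 * -z.re))]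
    with s hs₀ hs
  rw [div_lt_iff₀ (by linarith)] at hs
  have hsq : ‖z + s‖ ^ 2 < s ^ 2 := by
    rw [Complex.sq_norm, Complex.normSq_apply] at hs ⊢
    simp only [Complex.add_re, Complex.ofReal_re, Complex.add_im, Complex.ofReal_im, add_zero]
    nlinarith
  exact lt_of_pow_lt_pow_left₀ 2 hs₀.le hsq

theorem Metzler.nonneg_algebraMap_add {d : ℕ} {M : Matrix (Fin d) (Fin d) ℝ} (hM : Metzler M)
    {s : ℝ} (hs : ∀ i, -M i i ≤ s) : ∀ i j, 0 ≤ (algebraMap ℝ _ s + M) i j := by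
  intro i j
  rcases eq_or_ne i j with rfl | hij
  · simpa [algebraMap_eq_diagonal, neg_le_iff_add_nonneg] using hs i
  · simpa [algebraMap_eq_diagonal, hij] using hM i j hij

theorem HurwitzStable.of_metzler_le {d : ℕ} {M N : Matrix (Fin d) (Fin d) ℝ} (hM : Metzler M)
    (hMN : ∀ i j, M i j ≤ N i j) (hN : HurwitzStable N) : HurwitzStable M := by
  intro μ hμ
  by_contra! hre
  obtain ⟨s, hs_diag, hs_spec⟩ : ∃ s : ℝ, (∀ i, -M i i ≤ s) ∧
      ∀ κ ∈ spectrum ℂ (N.map Complex.ofReal), ‖κ + s‖ < s :=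
    ((eventually_all.2 fun i => eventually_ge_atTop (-M i i)).and
      ((eventually_all_finite (Matrix.finite_spectrum _)).2
        fun κ hκ => Complex.eventually_norm_add_ofReal_lt (hN κ hκ))).exists
  set P := algebraMap ℝ _ s + M
  set Q := algebraMap ℝ _ s + N
  have hP : ∀ i j, 0 ≤ P i j := hM.nonneg_algebraMap_add hs_diag
  have hPQ : ∀ i j, P i j ≤ Q i j := fun i j => add_le_add_right (hMN i j) _
  have hμs : μ + s ∈ spectrum ℂ (P.map Complex.ofReal) := by
    rw [Matrix.map_ofReal_algebraMap_add]
    exact spectrum.add_mem_add_iff.2 hμ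
  have : Nontrivial (Matrix (Fin d) (Fin d) ℂ) := by
    by_contra h
    rw [not_nontrivial_iff_subsingleton] at h
    simp [spectrum.of_subsingleton] at hμs
  have hs_le : s ≤ ‖μ + s‖ :=
    calc s ≤ (μ + s).re := by simpa using hre
      _ ≤ ‖μ + s‖ := Complex.re_le_norm _
  have hQ : spectralRadius ℂ (Q.map Complex.ofReal) < ‖μ + s‖₊ := by
    refine spectrum.spectralRadius_lt_of_forall_lt_of_nonempty (spectrum.nonempty _)
      fun k hk => ?_
    rw [Matrix.map_ofReal_algebraMap_add, ← sub_add_cancel k (s : ℂ),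
      spectrum.add_mem_add_iff] at hk
    have hk_lt := hs_spec _ hk
    rw [sub_add_cancel] at hk_lt
    exact_mod_cast hk_lt.trans_le hs_le
  have hP_rad : (‖μ + s‖₊ : ℝ≥0∞) ≤ spectralRadius ℂ (P.map Complex.ofReal) :=
    le_iSup₂ (α := ℝ≥0∞) _ hμs
  exact (hP_rad.trans (Matrix.spectralRadius_map_ofReal_mono hP hPQ)).not_gt hQ

theorem stmt8 {ndg nct ncv d : ℕ}
    (A : (Fin ndg → ℝ) → (Fin nct → ℝ) → (Fin ncv → ℝ) → Matrix (Fin d) (Fin d) ℝ)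
    (dglo dghi : Fin ndg → ℝ) (ctlo cthi : Fin nct → ℝ) (Pcv : Set (Fin ncv → ℝ))
    (hdg : dglo ≤ dghi) (hct : ctlo ≤ cthi)
    (hMetz : ∀ ρdg ∈ Set.Icc dglo dghi, ∀ ρct ∈ Set.Icc ctlo cthi, ∀ ρcv ∈ Pcv,
      Metzler (A ρdg ρct ρcv))
    (hmono : ∀ ρdg ∈ Set.Icc dglo dghi, ∀ ρct ∈ Set.Icc ctlo cthi, ∀ ρcv ∈ Pcv,
      ∀ i j, A ρdg ρct ρcv i j ≤ A dglo cthi ρcv i j) :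
    (∀ ρdg ∈ Set.Icc dglo dghi, ∀ ρct ∈ Set.Icc ctlo cthi, ∀ ρcv ∈ Pcv,
        HurwitzStable (A ρdg ρct ρcv)) ↔
      (∀ ρcv ∈ Pcv, HurwitzStable (A dglo cthi ρcv)) := by
  constructor
  · intro h ρcv hρcv
    exact h dglo (Set.left_mem_Icc.mpr hdg) cthi (Set.right_mem_Icc.mpr hct) ρcv hρcv
  · intro h ρdg hρdg ρct hρct ρcv hρcv
    exact (h ρcv hρcv).of_metzler_le (hMetz ρdg hρdg ρct hρct ρcv hρcv)
      (hmono ρdg hρdg ρct hρct ρcv hρcv)
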